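/- Let Λ, Λ₀ be positive definite d×d matrices, β₀ ∈ ℝ^d, S a positive definite d×d matrix, t ∈ ℝ^d with t ≠ 0, and Δ a fixed symmetric d×d matrix. For every c₂ > 1 there exists N such that for all n ≥ N: ‖[((1/n)Λ⁻¹Λ₀ + S + (1/n)Δ)⁻¹ − ((1/n)Λ⁻¹Λ₀ + S)⁻¹]·(t + (1/n)Λ⁻¹Λ₀β₀)‖₁ ≤ (c₂/n)·‖S⁻¹‖₁²·‖Δ‖₁·‖t‖₁. -/

import Mathlib

/-!
Write `A_n = (1/n) Λ⁻¹Λ₀ + S + (1/n) Δ`, `B_n = (1/n) Λ⁻¹Λ₀ + S` and `v_n = t + (1/n) Λ⁻¹Λ₀β₀`.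
Since `A⁻¹ - B⁻¹ = A⁻¹ (B - A) B⁻¹` and `B_n - A_n = -(1/n) Δ`, the error term is
`(1/n) ‖A_n⁻¹ Δ B_n⁻¹ v_n‖₁`. As `n → ∞`, `A_n, B_n → S` and `v_n → t`, so by continuity of
matrix inversion at `S` the last norm tends to `‖S⁻¹ Δ S⁻¹ t‖₁ ≤ ‖S⁻¹‖₁² ‖Δ‖₁ ‖t‖₁`. When `Δ ≠ 0` this bound
is positive, hence eventually exceeded by its `c₂`-multiple; when `Δ = 0` the error term vanishes.
-/

open Matrix

/-- The ℓ¹ norm on `ℝ^d`. -/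
def l1 {d : ℕ} (v : Fin d → ℝ) : ℝ := ∑ i, |v i|

/-- The operator norm of a `d × d` real matrix induced by the ℓ¹ norm,
i.e. the maximum absolute column sum. -/
noncomputable def matL1 {d : ℕ} (A : Matrix (Fin d) (Fin d) ℝ) : ℝ :=
  ⨆ k : Fin d, ∑ i, |A i k|

open Filter Topology

section L1

variable {d : ℕ}

lemma l1_smul (c : ℝ) (v : Fin d → ℝ) : l1 (c • v) = |c| * l1 v := by
  simp [l1, abs_mul, Finset.mul_sum]

lemma continuous_l1 : Continuous (l1 (d := d)) :=
  continuous_finsetSum _ fun i _ => (continuous_apply i).abs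

lemma l1_pos {v : Fin d → ℝ} (hv : v ≠ 0) : 0 < l1 v := by
  obtain ⟨i, hi⟩ := Function.ne_iff.mp hv
  exact (abs_pos.mpr hi).trans_le
    (Finset.single_le_sum (fun j _ => abs_nonneg (v j)) (Finset.mem_univ i))

lemma sum_abs_le_matL1 (A : Matrix (Fin d) (Fin d) ℝ) (k : Fin d) :
    ∑ i, |A i k| ≤ matL1 A :=
  le_ciSup (f := fun k => ∑ i, |A i k|) (Set.finite_range _).bddAbove k

lemma matL1_nonneg (A : Matrix (Fin d) (Fin d) ℝ) : 0 ≤ matL1 A :=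
  Real.iSup_nonneg fun _ => Finset.sum_nonneg fun _ _ => abs_nonneg _

lemma matL1_pos {A : Matrix (Fin d) (Fin d) ℝ} (hA : A ≠ 0) : 0 < matL1 A := by
  obtain ⟨i, k, hik⟩ : ∃ i k, A i k ≠ 0 := by
    by_contra! h
    exact hA (Matrix.ext h)
  calc 0 < |A i k| := abs_pos.mpr hik
    _ ≤ ∑ j, |A j k| := Finset.single_le_sum (fun j _ => abs_nonneg (A j k)) (Finset.mem_univ i)
    _ ≤ matL1 A := sum_abs_le_matL1 A k

lemma l1_mulVec_le (A : Matrix (Fin d) (Fin d) ℝ) (v : Fin d → ℝ) :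
    l1 (A *ᵥ v) ≤ matL1 A * l1 v :=
  calc l1 (A *ᵥ v) ≤ ∑ i, ∑ k, |A i k| * |v k| :=
        Finset.sum_le_sum fun i _ => by
          simpa only [mulVec, dotProduct, abs_mul] using
            Finset.abs_sum_le_sum_abs (fun k => A i k * v k) Finset.univ
    _ = ∑ k, (∑ i, |A i k|) * |v k| := by
        rw [Finset.sum_comm]
        simp only [Finset.sum_mul]
    _ ≤ ∑ k, matL1 A * |v k| :=
        Finset.sum_le_sum fun k _ =>
          mul_le_mul_of_nonneg_right (sum_abs_le_matL1 A k) (abs_nonneg _)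
    _ = matL1 A * l1 v := by rw [l1, Finset.mul_sum]

lemma l1_mulVec_mulVec_mulVec_le (A B C : Matrix (Fin d) (Fin d) ℝ) (v : Fin d → ℝ) :
    l1 (A *ᵥ B *ᵥ C *ᵥ v) ≤ matL1 A * matL1 B * matL1 C * l1 v :=
  calc l1 (A *ᵥ B *ᵥ C *ᵥ v) ≤ matL1 A * l1 (B *ᵥ C *ᵥ v) := l1_mulVec_le _ _
    _ ≤ matL1 A * (matL1 B * l1 (C *ᵥ v)) := by
        gcongr
        · exact matL1_nonneg A
        · exact l1_mulVec_le _ _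
    _ ≤ matL1 A * (matL1 B * (matL1 C * l1 v)) := by
        gcongr
        · exact matL1_nonneg A
        · exact matL1_nonneg B
        · exact l1_mulVec_le _ _
    _ = matL1 A * matL1 B * matL1 C * l1 v := by ring

end L1

theorem ContinuousAt.matrix_mulVec {m n R X : Type*} [Fintype n] [NonUnitalNonAssocSemiring R]
    [TopologicalSpace R] [ContinuousAdd R] [ContinuousMul R] [TopologicalSpace X]
    {A : X → Matrix m n R} {v : X → n → R} {x : X} (hA : ContinuousAt A x)
    (hv : ContinuousAt v x) : ContinuousAt (fun y => A y *ᵥ v y) x :=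
  (continuous_fst.matrix_mulVec continuous_snd).continuousAt.comp (f := fun y => (A y, v y))
    (hA.prodMk hv)

theorem ContinuousAt.matrix_inv {n 𝕜 X : Type*} [Fintype n] [DecidableEq n]
    [Field 𝕜] [TopologicalSpace 𝕜] [IsTopologicalRing 𝕜] [ContinuousInv₀ 𝕜]
    [TopologicalSpace X] {A : X → Matrix n n 𝕜} {x : X} (hA : ContinuousAt A x)
    (h : (A x).det ≠ 0) : ContinuousAt (fun y => (A y)⁻¹) x := by
  refine ContinuousAt.comp (f := A) (g := Inv.inv) ?_ hA
  refine continuousAt_matrix_inv _ ?_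
  rw [Ring.inverse_eq_inv']
  exact continuousAt_inv₀ h

theorem eventually_l1_inv_sub_inv_mulVec_le {d : ℕ} {S : Matrix (Fin d) (Fin d) ℝ}
    (hS : S.det ≠ 0) (M Δ : Matrix (Fin d) (Fin d) ℝ) (w t : Fin d → ℝ) {C : ℝ}
    (hC : l1 (S⁻¹ *ᵥ Δ *ᵥ S⁻¹ *ᵥ t) < C) :
    ∀ᶠ ε in 𝓝 (0 : ℝ),
      l1 (((ε • M + S + ε • Δ)⁻¹ - (ε • M + S)⁻¹) *ᵥ (t + ε • w)) ≤ |ε| * C := by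
  set A : ℝ → Matrix (Fin d) (Fin d) ℝ := fun ε => ε • M + S + ε • Δ
  set B : ℝ → Matrix (Fin d) (Fin d) ℝ := fun ε => ε • M + S
  have hA : Continuous A := by fun_prop
  have hB : Continuous B := by fun_prop
  have hA0 : A 0 = S := by simp [A]
  have hB0 : B 0 = S := by simp [B]
  have hdetA : ∀ᶠ ε in 𝓝 (0 : ℝ), (A ε).det ≠ 0 :=
    hA.matrix_det.continuousAt.eventually_ne (by rwa [hA0])
  have hdetB : ∀ᶠ ε in 𝓝 (0 : ℝ), (B ε).det ≠ 0 :=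
    hB.matrix_det.continuousAt.eventually_ne (by rwa [hB0])
  have hG : ContinuousAt (fun ε => l1 ((A ε)⁻¹ *ᵥ Δ *ᵥ (B ε)⁻¹ *ᵥ (t + ε • w))) 0 := by
    have hAinv := hA.continuousAt.matrix_inv (x := 0) (by rwa [hA0])
    have hBinv := hB.continuousAt.matrix_inv (x := 0) (by rwa [hB0])
    exact continuous_l1.continuousAt.comp <| hAinv.matrix_mulVec <|
      continuousAt_const.matrix_mulVec <| hBinv.matrix_mulVec (by fun_prop)
  have hGC : ∀ᶠ ε in 𝓝 (0 : ℝ), l1 ((A ε)⁻¹ *ᵥ Δ *ᵥ (B ε)⁻¹ *ᵥ (t + ε • w)) < C :=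
    hG.eventually_lt continuousAt_const (by simpa [hA0, hB0] using hC)
  filter_upwards [hdetA, hdetB, hGC] with ε hAε hBε hGε
  have hunits : IsUnit (A ε) ↔ IsUnit (B ε) :=
    iff_of_true ((isUnit_iff_isUnit_det _).2 hAε.isUnit) ((isUnit_iff_isUnit_det _).2 hBε.isUnit)
  have hBA : B ε - A ε = (-ε) • Δ := by simp [A, B]
  calc l1 (((A ε)⁻¹ - (B ε)⁻¹) *ᵥ (t + ε • w))
      = |ε| * l1 ((A ε)⁻¹ *ᵥ Δ *ᵥ (B ε)⁻¹ *ᵥ (t + ε • w)) := by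
        rw [inv_sub_inv hunits, hBA, Matrix.mul_smul, Matrix.smul_mul, Matrix.smul_mulVec,
          l1_smul, abs_neg, ← Matrix.mulVec_mulVec, ← Matrix.mulVec_mulVec]
    _ ≤ |ε| * C := by gcongr

theorem stmt_14_general {d : ℕ} (Λ Λ₀ S Δ : Matrix (Fin d) (Fin d) ℝ)
    (hS : S.PosDef)
    (β₀ t : Fin d → ℝ) (ht : t ≠ 0) :
    ∀ c₂ : ℝ, 1 < c₂ → ∃ N : ℕ, ∀ n ≥ N,
      l1 ((((n : ℝ)⁻¹ • (Λ⁻¹ * Λ₀) + S + (n : ℝ)⁻¹ • Δ)⁻¹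
            - ((n : ℝ)⁻¹ • (Λ⁻¹ * Λ₀) + S)⁻¹)
          *ᵥ (t + (n : ℝ)⁻¹ • ((Λ⁻¹ * Λ₀) *ᵥ β₀)))
        ≤ (c₂ / n) * matL1 S⁻¹ ^ 2 * matL1 Δ * l1 t := by
  intro c₂ hc₂
  rcases eq_or_ne Δ 0 with rfl | hΔ
  · exact ⟨0, fun n _ => by simp [matL1, l1]⟩
  have hdetS : S.det ≠ 0 := hS.det_pos.ne'
  have hSinv : S⁻¹ ≠ 0 := by
    intro h
    apply ht
    rw [← one_mulVec t, ← nonsing_inv_mul S (isUnit_iff_ne_zero.mpr hdetS), h, zero_mul,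
      zero_mulVec]
  set K := matL1 S⁻¹ ^ 2 * matL1 Δ * l1 t
  have hK : 0 < K := by
    have := matL1_pos hSinv
    have := matL1_pos hΔ
    have := l1_pos ht
    positivity
  have hC : l1 (S⁻¹ *ᵥ Δ *ᵥ S⁻¹ *ᵥ t) < c₂ * K :=
    calc l1 (S⁻¹ *ᵥ Δ *ᵥ S⁻¹ *ᵥ t) ≤ matL1 S⁻¹ * matL1 Δ * matL1 S⁻¹ * l1 t :=
          l1_mulVec_mulVec_mulVec_le S⁻¹ Δ S⁻¹ t
      _ = K := by ring
      _ < c₂ * K := lt_mul_of_one_lt_left hK hc₂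
  obtain ⟨N, hN⟩ := (tendsto_inv_atTop_nhds_zero_nat.eventually <|
    eventually_l1_inv_sub_inv_mulVec_le hdetS (Λ⁻¹ * Λ₀) Δ ((Λ⁻¹ * Λ₀) *ᵥ β₀) t hC
    ).exists_forall_of_atTop
  refine ⟨N, fun n hn => (hN n hn).trans_eq ?_⟩
  rw [abs_inv, Nat.abs_cast]
  ring

/-- **Second error term of private Bayesian linear regression.** For every `c₂ > 1` and all
sufficiently large `n`,
`‖[((1/n)Λ⁻¹Λ₀ + S + (1/n)Δ)⁻¹ − ((1/n)Λ⁻¹Λ₀ + S)⁻¹]·(t + (1/n)Λ⁻¹Λ₀β₀)‖₁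
  ≤ (c₂/n)·‖S⁻¹‖₁²·‖Δ‖₁·‖t‖₁`. -/
theorem stmt_14 {d : ℕ} (hd : 0 < d) (Λ Λ₀ S Δ : Matrix (Fin d) (Fin d) ℝ)
    (hΛ : Λ.PosDef) (hΛ₀ : Λ₀.PosDef) (hS : S.PosDef) (hΔ : Δ.IsSymm)
    (β₀ t : Fin d → ℝ) (ht : t ≠ 0) :
    ∀ c₂ : ℝ, 1 < c₂ → ∃ N : ℕ, ∀ n ≥ N,
      l1 ((((n : ℝ)⁻¹ • (Λ⁻¹ * Λ₀) + S + (n : ℝ)⁻¹ • Δ)⁻¹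
            - ((n : ℝ)⁻¹ • (Λ⁻¹ * Λ₀) + S)⁻¹)
          *ᵥ (t + (n : ℝ)⁻¹ • ((Λ⁻¹ * Λ₀) *ᵥ β₀)))
        ≤ (c₂ / n) * matL1 S⁻¹ ^ 2 * matL1 Δ * l1 t :=
  stmt_14_general Λ Λ₀ S Δ hS β₀ t ht
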